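/- For every c > 0, the set M_c = {y ∈ ℕ : ∃ k, T^k(y) < c·y} has natural density 1. -/

import Mathlib

open Filter

/-- The (accelerated) Collatz map. -/
def T (n : ℕ) : ℕ := if n % 2 = 0 then n / 2 else (3 * n + 1) / 2

/-- Parity of the k-th iterate. -/
def X (k y : ℕ) : ℕ := T^[k] y % 2

/-- S_m(y) = X_0(y) + ... + X_m(y). -/
def S (m y : ℕ) : ℕ := ∑ k ∈ Finset.range (m + 1), X k y

/-- Upper natural density. -/
noncomputable def ud (A : Set ℕ) : ℝ :=
  Filter.limsup (fun n => ((A ∩ Set.Iic n).ncard : ℝ) / n) Filter.atTop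

/-- Positive upper density preserving. -/
def PDP (H : Set ℕ → Set ℕ) : Prop := ∀ A : Set ℕ, 0 < ud A → 0 < ud (H A)

/-- H_f for real-valued f. -/
def Hf (f : ℕ → ℝ) (A : Set ℕ) : Set ℕ :=
  {m | ∃ n ∈ A, ∃ k : ℕ, T^[k] n = m ∧ (m : ℝ) < f n}

/-- H_f for ℕ-valued f. -/
def HfN (f : ℕ → ℕ) (A : Set ℕ) : Set ℕ :=
  {m | ∃ n ∈ A, ∃ k : ℕ, T^[k] n = m ∧ m < f n}

/-- S has natural density one. -/
def DensityOne (A : Set ℕ) : Prop :=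
  Filter.Tendsto (fun n => ((A ∩ Set.Iic n).ncard : ℝ) / n) Filter.atTop (nhds 1)

/-!
Let `oddCount m y` be the number of odd steps among the first `m` iterates of `y`. Since odd
steps map `n` to `(3 n + 1) / 2` and even steps to `n / 2`,
`2 ^ m * T^[m] y ≤ 3 ^ oddCount m y * (y + 2 ^ m)`. With `m = 5 j` steps of which at most `3 j`
are odd this is `T^[m] y ≤ (27 / 32) ^ j * y + 27 ^ j`, below `c * y` for large `y` once
`(27 / 32) ^ j < c / 2`.

The parities of the first `m` iterates of `y` depend only on `y mod 2 ^ m`, and the residues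
realise each parity pattern once, so `∑ r < 2 ^ m, 2 ^ oddCount m r = 3 ^ m`. By Markov's
inequality at most a fraction `3 ^ (5 j) / 2 ^ (8 j) = (243 / 256) ^ j` of the residues have more
than `3 j` odd steps. So the complement of the set has upper density at most `(243 / 256) ^ j`
for every `j`.
-/

-- For `m ≥ 1` this is `S (m - 1) y`.
def oddCount (m y : ℕ) : ℕ := ∑ i ∈ Finset.range m, X i y

lemma X_le_one (i y : ℕ) : X i y ≤ 1 := Nat.le_of_lt_succ (Nat.mod_lt _ two_pos)

lemma oddCount_succ (m y : ℕ) : oddCount (m + 1) y = oddCount m y + X m y :=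
  Finset.sum_range_succ _ _

lemma two_mul_T (n : ℕ) : 2 * T n = 3 ^ (n % 2) * n + n % 2 := by
  unfold T
  rcases Nat.mod_two_eq_zero_or_one n with h | h <;>
    simp only [h, one_ne_zero, ↓reduceIte, pow_zero, pow_one, one_mul] <;> omega

lemma T_add_two_mul (a b : ℕ) : T (a + 2 * b) = T a + 3 ^ (a % 2) * b := by
  apply Nat.eq_of_mul_eq_mul_left two_pos
  rw [mul_add, two_mul_T, two_mul_T, Nat.add_mul_mod_self_left]
  ring

lemma two_pow_mul_iterate_T_le (m y : ℕ) :
    2 ^ m * T^[m] y ≤ 3 ^ oddCount m y * (y + 2 ^ m) := by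
  induction m with
  | zero => simp [oddCount]
  | succ m ih =>
    rw [Function.iterate_succ_apply', oddCount_succ, X, pow_succ', mul_assoc, mul_left_comm,
      two_mul_T, pow_add]
    have hpos : 2 ^ m ≤ 3 ^ oddCount m y * 2 ^ m :=
      Nat.le_mul_of_pos_left _ (by positivity)
    rcases Nat.mod_two_eq_zero_or_one (T^[m] y) with h | h <;>
      simp only [h, pow_zero, pow_one, one_mul, mul_one, add_zero] <;>
      nlinarith [Nat.zero_le (2 ^ m)]

lemma iterate_T_add_two_pow_mul (m y t : ℕ) :
    T^[m] (y + 2 ^ m * t) = T^[m] y + 3 ^ oddCount m y * t := by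
  induction m generalizing t with
  | zero => simp [oddCount]
  | succ m ih =>
    rw [Function.iterate_succ_apply', Function.iterate_succ_apply', pow_succ, mul_assoc, ih,
      mul_left_comm, T_add_two_mul, oddCount_succ, pow_add, X]
    ring

lemma X_add_two_pow_mul {i m : ℕ} (h : i < m) (y t : ℕ) : X i (y + 2 ^ m * t) = X i y := by
  obtain ⟨k, rfl⟩ := Nat.exists_eq_add_of_lt h
  rw [X, X, show 2 ^ (i + k + 1) * t = 2 ^ i * (2 * (2 ^ k * t)) by ring,
    iterate_T_add_two_pow_mul, mul_left_comm, Nat.add_mul_mod_self_left]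

lemma oddCount_add_two_pow_mul (m y t : ℕ) : oddCount m (y + 2 ^ m * t) = oddCount m y :=
  Finset.sum_congr rfl fun _ hi => X_add_two_pow_mul (Finset.mem_range.mp hi) y t

lemma oddCount_mod_two_pow (m y : ℕ) : oddCount m (y % 2 ^ m) = oddCount m y := by
  conv_rhs => rw [← Nat.mod_add_div y (2 ^ m), oddCount_add_two_pow_mul]

lemma X_add_two_pow_add_X (m y : ℕ) : X m (y + 2 ^ m) + X m y = 1 := by
  have h3 : (3 ^ oddCount m y) % 2 = 1 := Nat.odd_iff.mp (Odd.pow (by decide))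
  have hshift := iterate_T_add_two_pow_mul m y 1
  rw [mul_one] at hshift
  rw [X, X, hshift]
  omega

-- Adding `2 ^ m` to `r` keeps the first `m` parities and flips the next one, so each step of
-- the induction multiplies the sum by `2 ^ 0 + 2 ^ 1`.
lemma sum_two_pow_oddCount (m : ℕ) :
    ∑ r ∈ Finset.range (2 ^ m), 2 ^ oddCount m r = 3 ^ m := by
  induction m with
  | zero => simp [oddCount]
  | succ m ih =>
    have hpair : ∀ r, 2 ^ oddCount (m + 1) r + 2 ^ oddCount (m + 1) (2 ^ m + r)
        = 3 * 2 ^ oddCount m r := by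
      intro r
      have hflip := X_add_two_pow_add_X m r
      have hshift := oddCount_add_two_pow_mul m r 1
      rw [mul_one] at hshift
      rw [oddCount_succ, oddCount_succ, add_comm (2 ^ m), hshift]
      obtain ⟨h₀, h₁⟩ | ⟨h₀, h₁⟩ : X m r = 0 ∧ X m (r + 2 ^ m) = 1 ∨
          X m r = 1 ∧ X m (r + 2 ^ m) = 0 := by
        have := X_le_one m r
        omega
      all_goals rw [h₀, h₁]; ring
    rw [pow_succ, mul_two, Finset.sum_range_add, ← Finset.sum_add_distrib,
      Finset.sum_congr rfl fun r _ => hpair r, ← Finset.mul_sum, ih, pow_succ, mul_comm]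

lemma card_filter_lt_oddCount_mul_le (m s : ℕ) :
    ((Finset.range (2 ^ m)).filter (s < oddCount m ·)).card * 2 ^ (s + 1) ≤ 3 ^ m := by
  rw [← sum_two_pow_oddCount, ← smul_eq_mul]
  refine (Finset.card_nsmul_le_sum _ _ _ fun r hr => ?_).trans
    (Finset.sum_le_sum_of_subset (Finset.filter_subset _ _))
  exact Nat.pow_le_pow_right two_pos (Finset.mem_filter.mp hr).2

lemma ncard_setOf_inter_Iic_le_of_mod {P : ℕ} (hP : 0 < P) (p : ℕ → Prop) [DecidablePred p]
    (hp : ∀ y, p y → p (y % P)) (n : ℕ) :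
    ({y | p y} ∩ Set.Iic n).ncard ≤ ((Finset.range P).filter p).card * (n / P + 1) := by
  rw [← Finset.card_range (n / P + 1), ← Finset.card_product,
    show {y | p y} ∩ Set.Iic n = ↑((Finset.Iic n).filter p) by ext; simp [and_comm],
    Set.ncard_coe_finset]
  refine Finset.card_le_card_of_injOn (fun y => (y % P, y / P)) (fun y hy => ?_)
    fun a _ b _ hab => ?_
  · simp only [Finset.coe_filter, Finset.mem_Iic, Set.mem_ofPred_eq] at hy
    simp only [Finset.coe_product, Finset.coe_filter, Finset.coe_range, Set.mem_prod,
      Set.mem_ofPred_eq, Set.mem_Iio, Finset.mem_range]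
    exact ⟨⟨Nat.mod_lt _ hP, hp y hy.2⟩, Nat.lt_succ_of_le (Nat.div_le_div_right hy.1)⟩
  · simp only [Prod.mk.injEq] at hab
    rw [← Nat.mod_add_div a P, ← Nat.mod_add_div b P, hab.1, hab.2]

lemma tendsto_ncard_inter_Iic_div_nhds_zero {B : Set ℕ}
    (h : ∀ ε > 0, ∃ C : ℝ, ∀ n : ℕ, ((B ∩ Set.Iic n).ncard : ℝ) ≤ ε * n + C) :
    Tendsto (fun n : ℕ => ((B ∩ Set.Iic n).ncard : ℝ) / n) atTop (nhds 0) := by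
  refine tendsto_order.2 ⟨fun a ha => Eventually.of_forall fun n => ha.trans_le (by positivity),
    fun ε hε => ?_⟩
  obtain ⟨C, hC⟩ := h (ε / 2) (half_pos hε)
  obtain ⟨N, hN⟩ := exists_nat_gt (2 * C / ε)
  filter_upwards [eventually_gt_atTop N] with n hn
  have hn' : 2 * C / ε < n := hN.trans (by exact_mod_cast hn)
  have hpos : (0 : ℝ) < n := by exact_mod_cast (Nat.zero_le N).trans_lt hn
  rw [div_lt_iff₀ hpos]
  rw [div_lt_iff₀ hε] at hn'
  linarith [hC n]

lemma densityOne_of_tendsto_compl {A : Set ℕ}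
    (h : Tendsto (fun n : ℕ => ((Aᶜ ∩ Set.Iic n).ncard : ℝ) / n) atTop (nhds 0)) :
    DensityOne A := by
  have hsplit (n : ℕ) : ((A ∩ Set.Iic n).ncard : ℝ) + (Aᶜ ∩ Set.Iic n).ncard = n + 1 := by
    have := Set.ncard_inter_add_ncard_sdiff_eq_ncard (Finset.Iic n : Set ℕ) A
    rw [Set.ncard_coe_finset, Nat.card_Iic, Set.sdiff_eq, Finset.coe_Iic, Set.inter_comm,
      Set.inter_comm _ Aᶜ] at this
    exact_mod_cast this
  have hlim := (tendsto_one_div_atTop_nhds_zero_nat (𝕜 := ℝ)).const_add 1 |>.sub h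
  rw [add_zero, sub_zero] at hlim
  refine hlim.congr' (eventually_gt_atTop 0 |>.mono fun n hn => ?_)
  have hpos : (n : ℝ) ≠ 0 := by positivity
  field_simp
  linarith [hsplit n]

lemma iterate_T_le_of_oddCount_le {m s y : ℕ} (hs : oddCount m y ≤ s) :
    (T^[m] y : ℝ) ≤ 3 ^ s / 2 ^ m * y + 3 ^ s := by
  have h : (2 ^ m * T^[m] y : ℝ) ≤ 3 ^ s * (y + 2 ^ m) :=
    calc (2 ^ m * T^[m] y : ℝ) ≤ 3 ^ oddCount m y * (y + 2 ^ m) := by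
          exact_mod_cast two_pow_mul_iterate_T_le m y
      _ ≤ 3 ^ s * (y + 2 ^ m) := by gcongr; norm_num
  rw [div_mul_eq_mul_div, div_add' _ _ _ (by positivity), le_div_iff₀ (by positivity)]
  linarith

lemma ncard_setOf_lt_oddCount_inter_Iic_le (m s n : ℕ) :
    (({y | s < oddCount m y} ∩ Set.Iic n).ncard : ℝ) ≤ 3 ^ m / 2 ^ (m + s) * n + 2 ^ m := by
  set B := ((Finset.range (2 ^ m)).filter (s < oddCount m ·)).card
  have hcount := ncard_setOf_inter_Iic_le_of_mod (p := (s < oddCount m ·)) (by positivity)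
    (fun y hy => (oddCount_mod_two_pow m y).symm ▸ hy) n
  have hB : (B : ℝ) ≤ 3 ^ m / 2 ^ s := by
    rw [le_div_iff₀ (by positivity)]
    exact_mod_cast (Nat.mul_le_mul_left B (Nat.pow_le_pow_right two_pos s.le_succ)).trans
      (card_filter_lt_oddCount_mul_le m s)
  have hBP : (B : ℝ) ≤ 2 ^ m := by
    exact_mod_cast (Finset.card_filter_le _ _).trans (Finset.card_range _).le
  calc (({y | s < oddCount m y} ∩ Set.Iic n).ncard : ℝ) ≤ B * ((n / 2 ^ m : ℕ) + 1) := by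
        exact_mod_cast hcount
    _ ≤ B * (n / 2 ^ m) + B := by
        rw [mul_add_one]; gcongr; exact_mod_cast Nat.cast_div_le (α := ℝ)
    _ ≤ 3 ^ m / 2 ^ s * (n / 2 ^ m) + 2 ^ m := by gcongr
    _ = 3 ^ m / 2 ^ (m + s) * n + 2 ^ m := by rw [pow_add]; ring

lemma compl_setOf_exists_iterate_T_lt_subset {c : ℝ} (hc : 0 < c) {j Y : ℕ}
    (hj : (27 / 32 : ℝ) ^ j < c / 2) (hY : 2 * 27 ^ j / c < Y) :
    {y : ℕ | ∃ k : ℕ, (T^[k] y : ℝ) < c * y}ᶜ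
      ⊆ Set.Iio Y ∪ {y | 3 * j < oddCount (5 * j) y} := by
  intro y hy
  by_contra hgood
  simp only [Set.mem_union, Set.mem_Iio, Set.mem_ofPred_eq, not_or, not_lt] at hgood
  have hlarge : 2 * 27 ^ j < c * y := by
    rw [div_lt_iff₀ hc] at hY
    nlinarith [(Nat.cast_le (α := ℝ)).2 hgood.1]
  have hiter := iterate_T_le_of_oddCount_le hgood.2
  rw [pow_mul, pow_mul, ← div_pow] at hiter
  norm_num at hiter
  exact hy ⟨5 * j, by nlinarith [(Nat.cast_nonneg y : (0 : ℝ) ≤ y)]⟩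

lemma ncard_inter_Iic_le_of_subset_Iio_union {A E : Set ℕ} {Y : ℕ} (h : A ⊆ Set.Iio Y ∪ E)
    (n : ℕ) : (A ∩ Set.Iic n).ncard ≤ Y + (E ∩ Set.Iic n).ncard := by
  calc (A ∩ Set.Iic n).ncard ≤ ((Set.Iio Y ∪ E) ∩ Set.Iic n).ncard :=
        Set.ncard_le_ncard (Set.inter_subset_inter_left _ h) ((Set.finite_Iic n).inter_of_right _)
    _ ≤ (Set.Iio Y ∩ Set.Iic n).ncard + (E ∩ Set.Iic n).ncard := by
        rw [Set.union_inter_distrib_right]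
        exact Set.ncard_union_le _ _
    _ ≤ Y + (E ∩ Set.Iic n).ncard := by
        grw [Set.ncard_le_ncard Set.inter_subset_left (Set.finite_Iio Y), Set.ncard_Iio_nat]

lemma ncard_setOf_lt_oddCount_five_mul_inter_Iic_le (j n : ℕ) :
    (({y | 3 * j < oddCount (5 * j) y} ∩ Set.Iic n).ncard : ℝ)
      ≤ (243 / 256 : ℝ) ^ j * n + 2 ^ (5 * j) := by
  convert ncard_setOf_lt_oddCount_inter_Iic_le (5 * j) (3 * j) n using 3
  rw [← add_mul, pow_mul, pow_mul, ← div_pow]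
  norm_num

theorem stmt16 (c : ℝ) (hc : 0 < c) :
    DensityOne {y : ℕ | ∃ k : ℕ, (T^[k] y : ℝ) < c * y} := by
  refine densityOne_of_tendsto_compl (tendsto_ncard_inter_Iic_div_nhds_zero fun ε hε => ?_)
  have hcontr := (tendsto_pow_atTop_nhds_zero_of_lt_one (r := (27 / 32 : ℝ)) (by norm_num)
    (by norm_num)).eventually_lt_const (half_pos hc)
  have hrare := (tendsto_pow_atTop_nhds_zero_of_lt_one (r := (243 / 256 : ℝ)) (by norm_num)
    (by norm_num)).eventually_lt_const hε
  obtain ⟨j, hj_contr, hj_rare⟩ := (hcontr.and hrare).exists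
  obtain ⟨Y, hY⟩ := exists_nat_gt (2 * 27 ^ j / c)
  refine ⟨Y + 2 ^ (5 * j), fun n => ?_⟩
  have hexc := ncard_inter_Iic_le_of_subset_Iio_union
    (compl_setOf_exists_iterate_T_lt_subset hc hj_contr hY) n
  have hbad := ncard_setOf_lt_oddCount_five_mul_inter_Iic_le j n
  calc _ ≤ (Y : ℝ) + ((243 / 256 : ℝ) ^ j * n + 2 ^ (5 * j)) := by
        grw [← hbad]; exact_mod_cast hexc
    _ ≤ ε * n + (Y + 2 ^ (5 * j)) := by nlinarith [(Nat.cast_nonneg n : (0 : ℝ) ≤ n)]
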